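/- arXiv:math/9903046 — 2 statements merged into one kernel-verified Lean document; each statement's English description precedes it below -/
import Mathlib

section
/- Every Levi nondegenerate pair of 2×2 complex Hermitian matrices is equivalent to one of the three normal forms: the hyperbolic pair (E₁₁, E₂₂), the parabolic pair (E₁₁, F), or the elliptic pair (F, G). That is, for every Levi nondegenerate pair (H₁, H₂) there exist T ∈ GL(2,ℂ) and S = (s_{νμ}) ∈ GL(2,ℝ) such that the pair (Tᴴ(s₁₁H₁+s₁₂H₂)T, Tᴴ(s₂₁H₁+s₂₂H₂)T) is one of these three pairs. -/
open Matrix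

noncomputable section

/-- The hyperbolic normal form matrix `E₁₁ = diag(1,0)`. -/
def E11 : Matrix (Fin 2) (Fin 2) ℂ := !![1, 0; 0, 0]

/-- The hyperbolic normal form matrix `E₂₂ = diag(0,1)`. -/
def E22 : Matrix (Fin 2) (Fin 2) ℂ := !![0, 0; 0, 1]

/-- The matrix `F` representing `Re z₁ z̄₂`. -/
def Fnf : Matrix (Fin 2) (Fin 2) ℂ := !![0, 1/2; 1/2, 0]

/-- The matrix `G` representing `Im z₁ z̄₂`. -/
def Gnf : Matrix (Fin 2) (Fin 2) ℂ := !![0, Complex.I/2; -Complex.I/2, 0]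

/-- Levi nondegeneracy of a pair of Hermitian 2×2 matrices: linear independence over ℝ
and no common annihilator. -/
def LeviNondeg (H₁ H₂ : Matrix (Fin 2) (Fin 2) ℂ) : Prop :=
  LinearIndependent ℝ ![H₁, H₂] ∧
    ∀ v : Fin 2 → ℂ, v ≠ 0 → ¬(H₁.mulVec v = 0 ∧ H₂.mulVec v = 0)

/-- Equivalence of pairs of Hermitian matrices: `H′_ν = Tᴴ (s_{ν1} H₁ + s_{ν2} H₂) T`
for some `T ∈ GL(2,ℂ)` and `S ∈ GL(2,ℝ)`. -/
def PairEquiv (H₁ H₂ H₁' H₂' : Matrix (Fin 2) (Fin 2) ℂ) : Prop :=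
  ∃ (T : Matrix (Fin 2) (Fin 2) ℂ) (S : Matrix (Fin 2) (Fin 2) ℝ),
    IsUnit T ∧ IsUnit S ∧
    H₁' = Tᴴ * (S 0 0 • H₁ + S 0 1 • H₂) * T ∧
    H₂' = Tᴴ * (S 1 0 • H₁ + S 1 1 • H₂) * T

namespace LeviAux

abbrev M2C := Matrix (Fin 2) (Fin 2) ℂ
abbrev M2R := Matrix (Fin 2) (Fin 2) ℝ

def Indep (X Y : M2C) : Prop := ∀ s t : ℝ, s • X + t • Y = 0 → s = 0 ∧ t = 0

lemma pe_congr (X Y T : M2C) (hT : IsUnit T) :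
    PairEquiv X Y (Tᴴ * X * T) (Tᴴ * Y * T) := by
  refine ⟨T, 1, hT, isUnit_one, ?_, ?_⟩ <;> simp [Matrix.one_apply]

lemma pe_mix (X Y : M2C) (S : M2R) (hS : IsUnit S) :
    PairEquiv X Y (S 0 0 • X + S 0 1 • Y) (S 1 0 • X + S 1 1 • Y) := by
  refine ⟨1, S, isUnit_one, hS, ?_, ?_⟩ <;> simp

lemma pe_trans {X Y X' Y' X'' Y'' : M2C} (h1 : PairEquiv X Y X' Y')
    (h2 : PairEquiv X' Y' X'' Y'') : PairEquiv X Y X'' Y'' := by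
  obtain ⟨T₁, S₁, hT₁, hS₁, e1, e2⟩ := h1
  obtain ⟨T₂, S₂, hT₂, hS₂, f1, f2⟩ := h2
  refine ⟨T₁ * T₂, S₂ * S₁, hT₁.mul hT₂, hS₂.mul hS₁, ?_, ?_⟩
  · rw [f1, e1, e2]
    simp only [Matrix.mul_apply, Fin.sum_univ_two, Matrix.conjTranspose_mul,
      Matrix.mul_add, Matrix.add_mul, Matrix.mul_smul, Matrix.smul_mul,
      smul_smul, add_smul, smul_add, mul_assoc, add_assoc]
    module
  · rw [f2, e1, e2]
    simp only [Matrix.mul_apply, Fin.sum_univ_two, Matrix.conjTranspose_mul,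
      Matrix.mul_add, Matrix.add_mul, Matrix.mul_smul, Matrix.smul_mul,
      smul_smul, add_smul, smul_add, mul_assoc, add_assoc]
    module

lemma cancel_congr {T M : M2C} (hT : IsUnit T) (h : Tᴴ * M * T = 0) : M = 0 := by
  have h1 : IsUnit Tᴴ := (Matrix.isUnit_conjTranspose T).2 hT
  have e : (Tᴴ)⁻¹ * (Tᴴ * M * T) * T⁻¹ = M := by
    rw [← Matrix.mul_assoc, ← Matrix.mul_assoc,
      Matrix.nonsing_inv_mul _ ((Matrix.isUnit_iff_isUnit_det _).1 h1), Matrix.one_mul,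
      Matrix.mul_assoc, Matrix.mul_nonsing_inv _ ((Matrix.isUnit_iff_isUnit_det _).1 hT),
      Matrix.mul_one]
  rw [← e, h]
  simp

lemma indep_congr {X Y : M2C} (T : M2C) (hT : IsUnit T) (h : Indep X Y) :
    Indep (Tᴴ * X * T) (Tᴴ * Y * T) := by
  intro s t hst
  apply h s t
  apply cancel_congr hT
  rw [← hst]
  simp only [Matrix.mul_add, Matrix.add_mul, Matrix.mul_smul, Matrix.smul_mul]

lemma indep_mix {X Y : M2C} (S : M2R) (hS : IsUnit S) (h : Indep X Y) :
    Indep (S 0 0 • X + S 0 1 • Y) (S 1 0 • X + S 1 1 • Y) := by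
  intro s t hst
  have hd : S 0 0 * S 1 1 - S 0 1 * S 1 0 ≠ 0 := by
    have := (Matrix.isUnit_iff_isUnit_det S).1 hS
    rw [Matrix.det_fin_two] at this
    exact isUnit_iff_ne_zero.1 this
  have key : (s * S 0 0 + t * S 1 0) • X + (s * S 0 1 + t * S 1 1) • Y = 0 := by
    rw [← hst]; module
  obtain ⟨h1, h2⟩ := h _ _ key
  have hs : s * (S 0 0 * S 1 1 - S 0 1 * S 1 0) = 0 := by
    linear_combination S 1 1 * h1 - S 1 0 * h2
  have ht : t * (S 0 0 * S 1 1 - S 0 1 * S 1 0) = 0 := by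
    linear_combination (- S 0 1) * h1 + S 0 0 * h2
  exact ⟨by rcases mul_eq_zero.1 hs with h|h; exact h; exact absurd h hd,
         by rcases mul_eq_zero.1 ht with h|h; exact h; exact absurd h hd⟩

lemma indep_neg_right {X Y : M2C} (h : Indep X Y) : Indep X (-Y) := by
  intro s t hst
  have := h s (-t) (by rw [← hst]; module)
  exact ⟨this.1, by linarith [this.2]⟩

lemma herm_mix {X Y : M2C} (hX : X.IsHermitian) (hY : Y.IsHermitian) (s t : ℝ) :
    (s • X + t • Y).IsHermitian := by
  rw [Matrix.IsHermitian, Matrix.conjTranspose_add, Matrix.conjTranspose_smul,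
    Matrix.conjTranspose_smul, star_trivial, star_trivial, hX.eq, hY.eq]

lemma herm_repr {A : M2C} (hA : A.IsHermitian) :
    ∃ (x y : ℝ) (c : ℂ), A = !![(x : ℂ), c; (starRingEnd ℂ) c, (y : ℂ)] := by
  refine ⟨(A 0 0).re, (A 1 1).re, A 0 1, ?_⟩
  have h00 : (starRingEnd ℂ) (A 0 0) = A 0 0 := by
    conv_rhs => rw [← hA.eq]
    simp [Matrix.conjTranspose_apply]
  have h11 : (starRingEnd ℂ) (A 1 1) = A 1 1 := by
    conv_rhs => rw [← hA.eq]
    simp [Matrix.conjTranspose_apply]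
  have h10 : A 1 0 = (starRingEnd ℂ) (A 0 1) := by
    conv_lhs => rw [← hA.eq]
    simp [Matrix.conjTranspose_apply]
  ext i j
  fin_cases i <;> fin_cases j <;>
    simp [Complex.conj_eq_iff_re.1 h00, Complex.conj_eq_iff_re.1 h11, h10]


def Jc : M2C := !![1, 0; 0, -1]

-- generic: S-mix with explicit 2x2 real matrix entries
lemma pe_mix' (X Y X' Y' : M2C) (s00 s01 s10 s11 : ℝ)
    (hdet : s00 * s11 - s01 * s10 ≠ 0)
    (h1 : s00 • X + s01 • Y = X') (h2 : s10 • X + s11 • Y = Y') :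
    PairEquiv X Y X' Y' := by
  have hu : IsUnit (!![s00, s01; s10, s11] : M2R) := by
    rw [Matrix.isUnit_iff_isUnit_det, Matrix.det_fin_two_of, isUnit_iff_ne_zero]
    exact hdet
  have := pe_mix X Y !![s00, s01; s10, s11] hu
  simpa [h1, h2] using this

lemma diag_to_hyp (p q r s : ℝ) (h : p * s - q * r ≠ 0) :
    PairEquiv !![(p:ℂ),0;0,(q:ℂ)] !![(r:ℂ),0;0,(s:ℂ)] E11 E22 := by
  have hdc : (p : ℂ) * s - q * r ≠ 0 := by
    intro hc; apply h; exact_mod_cast hc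
  have hdc2 : (s : ℂ) * p - q * r ≠ 0 := by intro h0; apply hdc; linear_combination h0
  have hdc3 : -((r : ℂ) * q) + p * s ≠ 0 := by intro h0; apply hdc; linear_combination h0
  refine pe_mix' _ _ _ _ (s/(p*s-q*r)) (-q/(p*s-q*r)) (-r/(p*s-q*r)) (p/(p*s-q*r)) ?_ ?_ ?_
  · field_simp
    intro hc
    simp at hc
    exact h (by linarith)
  · ext i j
    fin_cases i <;> fin_cases j <;>
      simp [E11, Complex.real_smul] <;> (try tauto) <;>
      push_cast <;> field_simp [hdc, hdc2, hdc3] <;> ring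
  · ext i j
    fin_cases i <;> fin_cases j <;>
      simp [E22, Complex.real_smul] <;> (try tauto) <;>
      push_cast <;> field_simp [hdc, hdc2, hdc3] <;> ring
    linear_combination mul_inv_cancel₀ hdc3

lemma offd_to_ell (ur ui vr vi : ℝ) (h : ur * vi - ui * vr ≠ 0) :
    PairEquiv !![0, (ur:ℂ) + ui * Complex.I; (ur:ℂ) - ui * Complex.I, 0]
      !![0, (vr:ℂ) + vi * Complex.I; (vr:ℂ) - vi * Complex.I, 0] Fnf Gnf := by
  have hdc : (ur : ℂ) * vi - ui * vr ≠ 0 := by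
    intro hc; apply h; exact_mod_cast hc
  have hdc2 : (vi : ℂ) * ur - ui * vr ≠ 0 := by intro h0; apply hdc; linear_combination h0
  have hdc3 : -((vr : ℂ) * ui) + ur * vi ≠ 0 := by intro h0; apply hdc; linear_combination h0
  refine pe_mix' _ _ _ _ (vi/(2*(ur*vi-ui*vr))) (-ui/(2*(ur*vi-ui*vr)))
    (-vr/(2*(ur*vi-ui*vr))) (ur/(2*(ur*vi-ui*vr))) ?_ ?_ ?_
  · field_simp
    intro hc
    simp at hc
    exact h (by linarith)
  · ext i j
    fin_cases i <;> fin_cases j <;>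
      simp [Fnf, Complex.real_smul] <;> (try tauto) <;>
      push_cast <;> field_simp [hdc, hdc2, hdc3] <;> ring
  · ext i j
    fin_cases i <;> fin_cases j <;>
      simp [Gnf, Complex.real_smul] <;> (try tauto) <;>
      push_cast <;> field_simp [hdc, hdc2, hdc3] <;> ring
    · linear_combination Complex.I * mul_inv_cancel₀ hdc3
    · linear_combination (-Complex.I) * mul_inv_cancel₀ hdc3

lemma isUnit_of_det_ne_zero {T : M2C} (h : T.det ≠ 0) : IsUnit T := by
  rw [Matrix.isUnit_iff_isUnit_det, isUnit_iff_ne_zero]; exact h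

lemma diag_pair (a b d₀ d₁ l₁ l₂ m : ℝ) (c : ℂ)
    (hc : c ≠ 0) (hd₀ : d₀ ≠ 0) (hd₁ : d₁ ≠ 0)
    (hcc : (starRingEnd ℂ) c * c = (m:ℂ))
    (hsum : d₀*d₁*(l₁+l₂) = a*d₁ + b*d₀)
    (hprod : d₀*d₁*(l₁*l₂) = a*b - m)
    (hne : l₁ ≠ l₂) :
    PairEquiv !![(a:ℂ), c; (starRingEnd ℂ) c, (b:ℂ)] !![(d₀:ℂ), 0; 0, (d₁:ℂ)] E11 E22 := by
  have hsumC : (d₀:ℂ)*d₁*(l₁+l₂) = a*d₁ + b*d₀ := by exact_mod_cast hsum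
  have hprodC : (d₀:ℂ)*d₁*(l₁*l₂) = a*b - m := by exact_mod_cast hprod
  have hd₁C : (d₁:ℂ) ≠ 0 := Complex.ofReal_ne_zero.2 hd₁
  set T : M2C := !![c, c; ((l₁*d₀ - a : ℝ):ℂ), ((l₂*d₀ - a : ℝ):ℂ)] with hTdef
  have hT : IsUnit T := by
    apply isUnit_of_det_ne_zero
    rw [hTdef, Matrix.det_fin_two_of]
    have h2 : c * ((l₂*d₀ - a : ℝ):ℂ) - c * ((l₁*d₀ - a : ℝ):ℂ)
        = c * (((l₂*d₀ - a : ℝ):ℂ) - ((l₁*d₀ - a : ℝ):ℂ)) := by ring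
    rw [h2]
    apply mul_ne_zero hc
    rw [sub_ne_zero]
    intro hcon
    apply hne
    have h3 : (l₁*d₀ - a : ℝ) = l₂*d₀ - a := by exact_mod_cast hcon.symm
    have h4 : l₁ * d₀ = l₂ * d₀ := by linarith
    exact mul_right_cancel₀ hd₀ h4
  have hA : Tᴴ * !![(a:ℂ), c; (starRingEnd ℂ) c, (b:ℂ)] * T
      = !![((l₁*(d₀*m + d₁*(l₁*d₀-a)^2) : ℝ):ℂ), 0; 0, ((l₂*(d₀*m + d₁*(l₂*d₀-a)^2) : ℝ):ℂ)] := by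
    ext i j
    fin_cases i <;> fin_cases j <;>
      simp [hTdef, Matrix.mul_apply, Fin.sum_univ_two, Matrix.conjTranspose_apply,
        Complex.conj_ofReal] <;> push_cast
    · linear_combination ((a:ℂ) + 2*((l₁:ℂ)*d₀ - a)) * hcc
        + (-((l₁:ℂ)*d₀ - a)*l₁) * hsumC + ((l₁:ℂ)*d₀ - a) * hprodC
    · apply mul_left_cancel₀ hd₁C
      rw [mul_zero]
      linear_combination ((d₁:ℂ)*(a + ((l₁:ℂ)*d₀ - a) + ((l₂:ℂ)*d₀ - a))) * hcc
        + ((m:ℂ) - a*b) * hsumC + (b:ℂ)*d₀ * hprodC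
    · apply mul_left_cancel₀ hd₁C
      rw [mul_zero]
      linear_combination ((d₁:ℂ)*(a + ((l₁:ℂ)*d₀ - a) + ((l₂:ℂ)*d₀ - a))) * hcc
        + ((m:ℂ) - a*b) * hsumC + (b:ℂ)*d₀ * hprodC
    · linear_combination ((a:ℂ) + 2*((l₂:ℂ)*d₀ - a)) * hcc
        + (-((l₂:ℂ)*d₀ - a)*l₂) * hsumC + ((l₂:ℂ)*d₀ - a) * hprodC
  have hJ : Tᴴ * !![(d₀:ℂ), 0; 0, (d₁:ℂ)] * T
      = !![((d₀*m + d₁*(l₁*d₀-a)^2 : ℝ):ℂ), 0; 0, ((d₀*m + d₁*(l₂*d₀-a)^2 : ℝ):ℂ)] := by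
    ext i j
    fin_cases i <;> fin_cases j <;>
      simp [hTdef, Matrix.mul_apply, Fin.sum_univ_two, Matrix.conjTranspose_apply,
        Complex.conj_ofReal] <;> push_cast
    · linear_combination (d₀:ℂ) * hcc
    · linear_combination (d₀:ℂ) * hcc + (-(a:ℂ)) * hsumC + (d₀:ℂ) * hprodC
    · linear_combination (d₀:ℂ) * hcc + (-(a:ℂ)) * hsumC + (d₀:ℂ) * hprodC
    · linear_combination (d₀:ℂ) * hcc
  have hμ : (d₀*m + d₁*(l₁*d₀-a)^2) * (d₀*m + d₁*(l₂*d₀-a)^2) ≠ 0 := by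
    have hdet : (Tᴴ * !![(d₀:ℂ), 0; 0, (d₁:ℂ)] * T).det ≠ 0 := by
      rw [Matrix.det_mul, Matrix.det_mul, Matrix.det_conjTranspose]
      refine mul_ne_zero (mul_ne_zero ?_ ?_) ?_
      · simpa using (isUnit_iff_ne_zero.1 ((Matrix.isUnit_iff_isUnit_det T).1 hT))
      · rw [Matrix.det_fin_two_of]
        simp only [mul_zero, zero_mul, sub_zero]
        exact mul_ne_zero (Complex.ofReal_ne_zero.2 hd₀) (Complex.ofReal_ne_zero.2 hd₁)
      · exact isUnit_iff_ne_zero.1 ((Matrix.isUnit_iff_isUnit_det T).1 hT)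
    rw [hJ, Matrix.det_fin_two_of] at hdet
    intro hcon
    apply hdet
    rw [show ((((d₀*m + d₁*(l₁*d₀-a)^2 : ℝ)):ℂ) * ((d₀*m + d₁*(l₂*d₀-a)^2 : ℝ):ℂ) - 0 * 0 : ℂ)
        = (((d₀*m + d₁*(l₁*d₀-a)^2) * (d₀*m + d₁*(l₂*d₀-a)^2) : ℝ) : ℂ) by push_cast; ring, hcon]
    simp
  have pc := pe_congr !![(a:ℂ), c; (starRingEnd ℂ) c, (b:ℂ)] !![(d₀:ℂ), 0; 0, (d₁:ℂ)] T hT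
  rw [hA, hJ] at pc
  refine pe_trans pc (diag_to_hyp (l₁*(d₀*m + d₁*(l₁*d₀-a)^2)) (l₂*(d₀*m + d₁*(l₂*d₀-a)^2))
    (d₀*m + d₁*(l₁*d₀-a)^2) (d₀*m + d₁*(l₂*d₀-a)^2) ?_)
  have hfac : l₁*(d₀*m + d₁*(l₁*d₀-a)^2) * (d₀*m + d₁*(l₂*d₀-a)^2)
      - l₂*(d₀*m + d₁*(l₂*d₀-a)^2) * (d₀*m + d₁*(l₁*d₀-a)^2)
      = (l₁ - l₂) * ((d₀*m + d₁*(l₁*d₀-a)^2) * (d₀*m + d₁*(l₂*d₀-a)^2)) := by ring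
  rw [hfac]
  exact mul_ne_zero (sub_ne_zero.2 hne) hμ

lemma parab_core (r : ℝ) (c' : ℂ) (hr : 0 < r)
    (hcc : (starRingEnd ℂ) c' * c' = ((r^4 : ℝ):ℂ)) :
    ∃ T : M2C, IsUnit T ∧
      Tᴴ * !![((r^2 : ℝ):ℂ), c'; (starRingEnd ℂ) c', ((r^2:ℝ):ℂ)] * T
        = !![((4*r^6 : ℝ):ℂ), 0; 0, 0] ∧
      Tᴴ * Jc * T = !![0, ((2*r^4 : ℝ):ℂ); ((2*r^4 : ℝ):ℂ), 0] := by
  have hrC : (r:ℂ) ≠ 0 := Complex.ofReal_ne_zero.2 (ne_of_gt hr)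
  have hc' : (starRingEnd ℂ) c' ≠ 0 := by
    intro h0
    rw [h0, zero_mul] at hcc
    have h4 : (r:ℝ)^4 = 0 := by exact_mod_cast hcc.symm
    exact absurd (pow_eq_zero_iff (by norm_num : (4:ℕ) ≠ 0) |>.1 h4) (ne_of_gt hr)
  have hcc' : (starRingEnd ℂ) c' * c' = (r:ℂ)^4 := by push_cast at hcc ⊢; exact hcc
  refine ⟨!![((r^2 : ℝ):ℂ), ((r^2 : ℝ):ℂ); (starRingEnd ℂ) c', -((starRingEnd ℂ) c')], ?_, ?_, ?_⟩
  · apply isUnit_of_det_ne_zero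
    rw [Matrix.det_fin_two_of]
    have he : ((r^2 : ℝ):ℂ) * (-((starRingEnd ℂ) c')) - ((r^2 : ℝ):ℂ) * (starRingEnd ℂ) c'
        = -(2 * ((r^2:ℝ):ℂ) * (starRingEnd ℂ) c') := by ring
    rw [he, neg_ne_zero]
    push_cast
    exact mul_ne_zero (mul_ne_zero two_ne_zero (pow_ne_zero _ hrC)) hc'
  · ext i j
    fin_cases i <;> fin_cases j <;>
      simp [Matrix.mul_apply, Fin.sum_univ_two, Matrix.conjTranspose_apply,
        Complex.conj_ofReal, map_neg, Complex.conj_conj] <;> push_cast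
    · linear_combination (3*(r:ℂ)^2) * hcc'
    · linear_combination (-(r:ℂ)^2) * hcc'
    · linear_combination (-(r:ℂ)^2) * hcc'
    · linear_combination (-(r:ℂ)^2) * hcc'
  · ext i j
    fin_cases i <;> fin_cases j <;>
      simp [Jc, Matrix.mul_apply, Fin.sum_univ_two, Matrix.conjTranspose_apply,
        Complex.conj_ofReal, map_neg, Complex.conj_conj] <;> push_cast
    · linear_combination (-1 : ℂ) * hcc'
    · linear_combination (1 : ℂ) * hcc'
    · linear_combination (1 : ℂ) * hcc'
    · linear_combination (-1 : ℂ) * hcc'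

lemma parab (a b m : ℝ) (c : ℂ) (hm : 0 < m)
    (hcc : (starRingEnd ℂ) c * c = (m:ℂ))
    (hΔ : (a+b)^2 = 4*m) :
    PairEquiv !![(a:ℂ), c; (starRingEnd ℂ) c, (b:ℂ)] Jc E11 Fnf := by
  have hs₀sq : ((a+b)/2)^2 = m := by nlinarith
  have hs₀ne : (a+b)/2 ≠ 0 := by
    intro h0; rw [h0] at hs₀sq; nlinarith
  -- sign
  rcases lt_or_gt_of_ne hs₀ne with hneg | hpos
  case' inl => set σ : ℝ := -1 with hσdef
  case' inr => set σ : ℝ := 1 with hσdef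
  all_goals (
    first
      | (have hσ2 : σ^2 = 1 := by rw [hσdef]; norm_num
         have hσne : σ ≠ 0 := by rw [hσdef]; norm_num
         have hσs : 0 < σ * ((a+b)/2) := by rw [hσdef]; nlinarith))
  all_goals (
    set r : ℝ := Real.sqrt (σ * ((a+b)/2)) with hrdef
    have hr : 0 < r := Real.sqrt_pos.2 hσs
    have hr2 : r^2 = σ * ((a+b)/2) := Real.sq_sqrt hσs.le
    have hr4 : r^4 = m := by nlinarith [hr2, hs₀sq, hσ2]
    have hccσ : (starRingEnd ℂ) (((σ:ℝ):ℂ) * c) * (((σ:ℝ):ℂ) * c) = ((r^4 : ℝ):ℂ) := by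
      rw [_root_.map_mul, Complex.conj_ofReal]
      rw [show ((σ:ℝ):ℂ) * (starRingEnd ℂ) c * (((σ:ℝ):ℂ) * c)
          = (((σ^2:ℝ)):ℂ) * ((starRingEnd ℂ) c * c) by push_cast; ring]
      rw [hcc, hσ2, hr4]
      push_cast; ring
    obtain ⟨T, hT, hB, hJ⟩ := parab_core r (((σ:ℝ):ℂ) * c) hr hccσ
    have step1 : PairEquiv !![(a:ℂ), c; (starRingEnd ℂ) c, (b:ℂ)] Jc
        !![((r^2 : ℝ):ℂ), ((σ:ℝ):ℂ) * c;
           (starRingEnd ℂ) (((σ:ℝ):ℂ) * c), ((r^2:ℝ):ℂ)] Jc := by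
      refine pe_mix' _ _ _ _ σ (-σ * ((a-b)/2)) 0 1 (by simpa using hσne) ?_ ?_
      · ext i j
        fin_cases i <;> fin_cases j <;>
          simp [Jc, Complex.real_smul, _root_.map_mul, Complex.conj_ofReal, hr2] <;>
          push_cast <;> ring
      · ext i j
        fin_cases i <;> fin_cases j <;> simp [Jc]
    have step2 := pe_congr !![((r^2 : ℝ):ℂ), ((σ:ℝ):ℂ) * c;
        (starRingEnd ℂ) (((σ:ℝ):ℂ) * c), ((r^2:ℝ):ℂ)] Jc T hT
    rw [hB, hJ] at step2
    have step3 : PairEquiv !![((4*r^6 : ℝ):ℂ), 0; 0, 0]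
        !![0, ((2*r^4 : ℝ):ℂ); ((2*r^4 : ℝ):ℂ), 0] E11 Fnf := by
      have hrne : r ≠ 0 := ne_of_gt hr
      have hrC : (r:ℂ) ≠ 0 := Complex.ofReal_ne_zero.2 hrne
      refine pe_mix' _ _ _ _ (1/(4*r^6)) 0 0 (1/(4*r^4))
        (by simp only [zero_mul, mul_zero, sub_zero]; positivity) ?_ ?_
      · ext i j
        fin_cases i <;> fin_cases j <;>
          simp [E11, Complex.real_smul] <;> push_cast <;> field_simp [hrC] <;> (try ring)
      · ext i j
        fin_cases i <;> fin_cases j <;>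
          simp [Fnf, Complex.real_smul] <;> push_cast <;> field_simp [hrC] <;> ring
    exact pe_trans step1 (pe_trans step2 step3))

lemma ellip (a b m y : ℝ) (c : ℂ) (hm : 0 < m)
    (hcc : (starRingEnd ℂ) c * c = (m:ℂ))
    (hy : 0 < y) (hy2 : y^2 = m - ((a+b)/2)^2) :
    PairEquiv !![(a:ℂ), c; (starRingEnd ℂ) c, (b:ℂ)] Jc Fnf Gnf := by
  have hcne : c ≠ 0 := by
    intro h0; rw [h0, mul_zero] at hcc
    have : m = 0 := by exact_mod_cast hcc.symm
    exact (ne_of_gt hm) this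
  set s₀ : ℝ := (a+b)/2 with hs₀def
  have hs₀ : 2*s₀ = a + b := by rw [hs₀def]; ring
  have hs₀C : 2*((s₀:ℝ):ℂ) = (a:ℂ) + (b:ℂ) := by exact_mod_cast hs₀
  have hy2C : ((y:ℝ):ℂ)^2 = ((m:ℝ):ℂ) - ((s₀:ℝ):ℂ)^2 := by exact_mod_cast hy2
  have hI : Complex.I^2 = -1 := Complex.I_sq
  set T : M2C := !![((-s₀ : ℝ):ℂ) + (y:ℝ) * Complex.I, ((-s₀ : ℝ):ℂ) - (y:ℝ) * Complex.I;
      (starRingEnd ℂ) c, (starRingEnd ℂ) c] with hTdef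
  have hT : IsUnit T := by
    apply isUnit_of_det_ne_zero
    rw [hTdef, Matrix.det_fin_two_of]
    have he : (((-s₀ : ℝ):ℂ) + (y:ℝ) * Complex.I) * (starRingEnd ℂ) c
        - (((-s₀ : ℝ):ℂ) - (y:ℝ) * Complex.I) * (starRingEnd ℂ) c
        = 2 * (y:ℂ) * Complex.I * (starRingEnd ℂ) c := by ring
    rw [he]
    refine mul_ne_zero (mul_ne_zero (mul_ne_zero two_ne_zero
      (Complex.ofReal_ne_zero.2 (ne_of_gt hy))) Complex.I_ne_zero) ?_
    simpa using hcne
  have hA : Tᴴ * !![(a:ℂ), c; (starRingEnd ℂ) c, (b:ℂ)] * T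
      = !![0, ((a*(s₀^2-y^2) - 2*m*s₀ + b*m : ℝ):ℂ) + ((2*a*s₀*y - 2*m*y : ℝ):ℂ) * Complex.I;
           ((a*(s₀^2-y^2) - 2*m*s₀ + b*m : ℝ):ℂ) - ((2*a*s₀*y - 2*m*y : ℝ):ℂ) * Complex.I, 0] := by
    ext i j
    fin_cases i <;> fin_cases j <;>
      simp [hTdef, Matrix.mul_apply, Fin.sum_univ_two, Matrix.conjTranspose_apply,
        Complex.conj_ofReal, map_add, map_sub, _root_.map_mul, Complex.conj_conj, Complex.conj_I] <;>
      push_cast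
    · linear_combination (-(a:ℂ)*(y:ℂ)^2) * hI + ((b:ℂ) - 2*(s₀:ℂ)) * hcc
        + (a:ℂ) * hy2C + (-(m:ℂ)) * hs₀C
    · linear_combination ((a:ℂ)*(y:ℂ)^2) * hI + ((b:ℂ) - 2*(s₀:ℂ) - 2*(y:ℂ)*Complex.I) * hcc
    · linear_combination ((a:ℂ)*(y:ℂ)^2) * hI + ((b:ℂ) - 2*(s₀:ℂ) + 2*(y:ℂ)*Complex.I) * hcc
    · linear_combination (-(a:ℂ)*(y:ℂ)^2) * hI + ((b:ℂ) - 2*(s₀:ℂ)) * hcc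
        + (a:ℂ) * hy2C + (-(m:ℂ)) * hs₀C
  have hJ : Tᴴ * Jc * T
      = !![0, ((s₀^2 - y^2 - m : ℝ):ℂ) + ((2*s₀*y : ℝ):ℂ) * Complex.I;
           ((s₀^2 - y^2 - m : ℝ):ℂ) - ((2*s₀*y : ℝ):ℂ) * Complex.I, 0] := by
    ext i j
    fin_cases i <;> fin_cases j <;>
      simp [hTdef, Jc, Matrix.mul_apply, Fin.sum_univ_two, Matrix.conjTranspose_apply,
        Complex.conj_ofReal, map_add, map_sub, _root_.map_mul, Complex.conj_conj, Complex.conj_I] <;>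
      push_cast
    · linear_combination (-(y:ℂ)^2) * hI + (-1 : ℂ) * hcc + (1:ℂ) * hy2C
    · linear_combination ((y:ℂ)^2) * hI + (-1 : ℂ) * hcc
    · linear_combination ((y:ℂ)^2) * hI + (-1 : ℂ) * hcc
    · linear_combination (-(y:ℂ)^2) * hI + (-1 : ℂ) * hcc + (1:ℂ) * hy2C
  have hδ : (a*(s₀^2-y^2) - 2*m*s₀ + b*m) * (2*s₀*y)
      - (2*a*s₀*y - 2*m*y) * (s₀^2 - y^2 - m) = -(4*m*y^3) := by
    linear_combination (2*y*m) * hy2 + (-2*y*m*s₀) * (hs₀)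
  have hδne : (a*(s₀^2-y^2) - 2*m*s₀ + b*m) * (2*s₀*y)
      - (2*a*s₀*y - 2*m*y) * (s₀^2 - y^2 - m) ≠ 0 := by
    rw [hδ]
    intro h0
    nlinarith [mul_pos hm (pow_pos hy 3)]
  have pc := pe_congr !![(a:ℂ), c; (starRingEnd ℂ) c, (b:ℂ)] Jc T hT
  rw [hA, hJ] at pc
  exact pe_trans pc (offd_to_ell _ _ _ _ hδne)

lemma norm_indef (d₀ d₁ : ℝ) (h₀ : 0 < d₀) (h₁ : d₁ < 0) :
    ∃ T : M2C, IsUnit T ∧ Tᴴ * !![(d₀:ℂ), 0; 0, (d₁:ℂ)] * T = Jc := by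
  have hs₀ : Real.sqrt d₀ ≠ 0 := ne_of_gt (Real.sqrt_pos.2 h₀)
  have hs₁ : Real.sqrt (-d₁) ≠ 0 := ne_of_gt (Real.sqrt_pos.2 (by linarith))
  have hm₀ : Real.sqrt d₀ * Real.sqrt d₀ = d₀ := Real.mul_self_sqrt h₀.le
  have hm₁ : Real.sqrt (-d₁) * Real.sqrt (-d₁) = -d₁ := Real.mul_self_sqrt (by linarith)
  refine ⟨!![(((Real.sqrt d₀)⁻¹ : ℝ):ℂ), 0; 0, (((Real.sqrt (-d₁))⁻¹ : ℝ):ℂ)], ?_, ?_⟩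
  · apply isUnit_of_det_ne_zero
    rw [Matrix.det_fin_two_of]
    simp only [mul_zero, zero_mul, sub_zero]
    push_cast
    exact mul_ne_zero (inv_ne_zero (Complex.ofReal_ne_zero.2 hs₀))
      (inv_ne_zero (Complex.ofReal_ne_zero.2 hs₁))
  · ext i j
    fin_cases i <;> fin_cases j <;>
      simp [Jc, Matrix.mul_apply, Fin.sum_univ_two, Matrix.conjTranspose_apply,
        Complex.conj_ofReal]
    · exact_mod_cast (by field_simp; rw [Real.sq_sqrt h₀.le] : ((Real.sqrt d₀)⁻¹ * d₀ * (Real.sqrt d₀)⁻¹ : ℝ) = 1)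
    · exact_mod_cast (by rw [show (d₁:ℝ) = -(Real.sqrt (-d₁) * Real.sqrt (-d₁)) by
                               rw [hm₁]; ring]
                         field_simp; rw [Real.sqrt_sq (Real.sqrt_nonneg _)] : ((Real.sqrt (-d₁))⁻¹ * d₁ * (Real.sqrt (-d₁))⁻¹ : ℝ) = -1)

lemma herm_inv_diag (p r : ℝ) (q : ℂ) (hdet : p * r - Complex.normSq q ≠ 0) :
    ∃ (T : M2C) (d₀ d₁ : ℝ), IsUnit T ∧ d₀ ≠ 0 ∧ d₁ ≠ 0 ∧
      Tᴴ * !![(p:ℂ), q; (starRingEnd ℂ) q, (r:ℂ)] * T = !![(d₀:ℂ), 0; 0, (d₁:ℂ)] := by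
  set mq : ℝ := Complex.normSq q with hmq
  have hccq : (starRingEnd ℂ) q * q = (mq:ℂ) := by
    rw [mul_comm]; exact_mod_cast Complex.mul_conj q
  by_cases hp : p ≠ 0
  · have hpC : (p:ℂ) ≠ 0 := Complex.ofReal_ne_zero.2 hp
    refine ⟨!![1, -(q/(p:ℂ)); 0, 1], p, (p*r - mq)/p, ?_, hp, ?_, ?_⟩
    · apply isUnit_of_det_ne_zero
      rw [Matrix.det_fin_two_of]; simp
    · exact div_ne_zero hdet hp
    · ext i j
      fin_cases i <;> fin_cases j <;>
        simp [Matrix.mul_apply, Fin.sum_univ_two, Matrix.conjTranspose_apply,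
          Complex.conj_ofReal, map_div₀, map_neg] <;> push_cast <;>
        field_simp <;>
        (try ring) <;> (try linear_combination (-(1:ℂ) - p) * hccq) <;>
        (try linear_combination hccq) <;> (try linear_combination (p:ℂ) * hccq) <;>
        (try linear_combination (-(1:ℂ)) * hccq)
  push_neg at hp
  subst hp
  by_cases hr : r ≠ 0
  · have hrC : (r:ℂ) ≠ 0 := Complex.ofReal_ne_zero.2 hr
    have hmqne : mq ≠ 0 := by simpa using hdet
    refine ⟨!![0, 1; 1, -((starRingEnd ℂ) q/(r:ℂ))], r, -mq/r, ?_, hr, ?_, ?_⟩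
    · apply isUnit_of_det_ne_zero
      rw [Matrix.det_fin_two_of]; simp
    · exact div_ne_zero (neg_ne_zero.2 hmqne) hr
    · ext i j
      fin_cases i <;> fin_cases j <;>
        simp [Matrix.mul_apply, Fin.sum_univ_two, Matrix.conjTranspose_apply,
          Complex.conj_ofReal, map_div₀, map_neg, Complex.conj_conj] <;> push_cast <;>
        field_simp <;>
        (try ring) <;> (try left; linear_combination hccq) <;>
        (try linear_combination (-(1:ℂ) - r) * hccq) <;>
        (try linear_combination hccq) <;> (try linear_combination (r:ℂ) * hccq) <;>
        (try linear_combination (-(1:ℂ)) * hccq)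
  push_neg at hr
  subst hr
  have hmqne : mq ≠ 0 := by simpa using hdet
  have hq : q ≠ 0 := by
    intro h0; apply hmqne; rw [hmq, h0]; simp
  have hqb : (starRingEnd ℂ) q ≠ 0 := by simpa using hq
  refine ⟨!![1, 1; 1/q, -(1/q)], 2, -2, ?_, two_ne_zero, by norm_num, ?_⟩
  · apply isUnit_of_det_ne_zero
    rw [Matrix.det_fin_two_of]
    rw [show (1 * -(1/q) - 1 * (1/q) : ℂ) = -(2/q) by ring]
    simp [hq]
  · ext i j
    fin_cases i <;> fin_cases j <;>
      simp [Matrix.mul_apply, Fin.sum_univ_two, Matrix.conjTranspose_apply,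
        Complex.conj_ofReal, map_div₀, map_neg, _root_.map_one, Complex.conj_conj] <;> push_cast <;>
      field_simp <;>
      (try norm_num) <;> (try ring) <;> (try linear_combination 2 * hccq) <;>
      (try linear_combination hccq) <;> (try linear_combination (-(1:ℂ)) * hccq) <;>
      (try linear_combination (-(2:ℂ)) * hccq)

lemma li_pair {X Y : M2C} (h : LinearIndependent ℝ ![X, Y]) : Indep X Y := by
  intro s t hst
  have h2 := Fintype.linearIndependent_iff.1 h ![s, t] ?_
  · exact ⟨h2 0, h2 1⟩
  · simpa [Fin.sum_univ_two] using hst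

lemma exists_nondeg (H₁ H₂ : M2C) (h₁ : H₁.IsHermitian) (h₂ : H₂.IsHermitian)
    (hnd : LeviNondeg H₁ H₂) : ∃ s t : ℝ, (s • H₁ + t • H₂).det ≠ 0 := by
  by_contra hall
  push_neg at hall
  obtain ⟨a₁, b₁, c₁, e₁⟩ := herm_repr h₁
  obtain ⟨a₂, b₂, c₂, e₂⟩ := herm_repr h₂
  have ind : Indep H₁ H₂ := li_pair hnd.1
  have key : ∀ s t : ℝ, ((s:ℂ)*a₁ + t*a₂)*((s:ℂ)*b₁ + t*b₂)
      - ((s:ℂ)*c₁ + t*c₂)*((s:ℂ)*(starRingEnd ℂ) c₁ + t*(starRingEnd ℂ) c₂) = 0 := by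
    intro s t
    have h0 := hall s t
    rw [e₁, e₂, Matrix.det_fin_two] at h0
    simp [Complex.real_smul] at h0
    linear_combination h0
  have E1 : (a₁:ℂ)*b₁ - c₁*(starRingEnd ℂ) c₁ = 0 := by
    have h5 := key 1 0; push_cast at h5; linear_combination h5
  have E2 : (a₂:ℂ)*b₂ - c₂*(starRingEnd ℂ) c₂ = 0 := by
    have h5 := key 0 1; push_cast at h5; linear_combination h5
  have E3 : (a₁:ℂ)*b₂ + (a₂:ℂ)*b₁ - c₁*(starRingEnd ℂ) c₂ - c₂*(starRingEnd ℂ) c₁ = 0 := by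
    have h5 := key 1 1; push_cast at h5; linear_combination h5 - E1 - E2
  have keyfac : ((a₁:ℂ)*c₂ - (a₂:ℂ)*c₁) * ((a₁:ℂ)*(starRingEnd ℂ) c₂ - (a₂:ℂ)*(starRingEnd ℂ) c₁) = 0 := by
    linear_combination (-(a₁:ℂ)^2) * E2 - (a₂:ℂ)^2 * E1 + (a₁:ℂ)*(a₂:ℂ) * E3
  by_cases ha₁ : a₁ = 0
  · -- c₁ = 0
    subst ha₁
    push_cast [map_zero] at E1 E2 E3 keyfac
    have hc₁ : c₁ = 0 := by
      have h5 : c₁ * (starRingEnd ℂ) c₁ = 0 := by linear_combination -E1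
      rw [Complex.mul_conj] at h5
      exact Complex.normSq_eq_zero.1 (by exact_mod_cast h5)
    subst hc₁
    push_cast [map_zero] at E2 E3 keyfac
    by_cases hb₁ : b₁ = 0
    · -- H₁ = 0
      have hH₁ : H₁ = 0 := by
        rw [e₁, hb₁]; ext i j; fin_cases i <;> fin_cases j <;> simp
      have := ind 1 0 (by rw [hH₁]; simp)
      exact one_ne_zero this.1
    · have ha₂ : a₂ = 0 := by
        have h5 : (a₂:ℂ)*b₁ = 0 := by linear_combination E3
        rcases mul_eq_zero.1 h5 with h6 | h6
        · exact_mod_cast h6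
        · exact absurd (by exact_mod_cast h6 : b₁ = 0) hb₁
      subst ha₂
      push_cast [map_zero] at E2 E3
      have hc₂ : c₂ = 0 := by
        have h5 : c₂ * (starRingEnd ℂ) c₂ = 0 := by linear_combination -E2
        rw [Complex.mul_conj] at h5
        exact Complex.normSq_eq_zero.1 (by exact_mod_cast h5)
      subst hc₂
      push_cast [map_zero] at E3
      refine hnd.2 ![1, 0] (by intro h0; simpa using congrFun h0 0) ⟨?_, ?_⟩
      · rw [e₁]
        funext i
        fin_cases i <;> simp [Matrix.mulVec, dotProduct, Fin.sum_univ_two]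
      · rw [e₂]
        funext i
        fin_cases i <;> simp [Matrix.mulVec, dotProduct, Fin.sum_univ_two]
  · -- a₁ ≠ 0
    by_cases ha₂ : a₂ = 0
    · subst ha₂
      push_cast [map_zero] at E2 E3
      have hc₂ : c₂ = 0 := by
        have h5 : c₂ * (starRingEnd ℂ) c₂ = 0 := by linear_combination -E2
        rw [Complex.mul_conj] at h5
        exact Complex.normSq_eq_zero.1 (by exact_mod_cast h5)
      subst hc₂
      push_cast [map_zero] at E3
      have hb₂ : (b₂ : ℂ) = 0 := by
        have h5 : (a₁:ℂ)*b₂ = 0 := by linear_combination E3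
        rcases mul_eq_zero.1 h5 with h6 | h6
        · exact absurd (by exact_mod_cast h6 : a₁ = 0) ha₁
        · exact h6
      have hH₂ : H₂ = 0 := by
        rw [e₂]; ext i j; fin_cases i <;> fin_cases j <;> simp [hb₂]
      have := ind 0 1 (by rw [hH₂]; simp)
      exact one_ne_zero this.2
    · -- both nonzero: H₂ proportional to H₁
      have ha₁C : (a₁:ℂ) ≠ 0 := Complex.ofReal_ne_zero.2 ha₁
      have ha₂C : (a₂:ℂ) ≠ 0 := Complex.ofReal_ne_zero.2 ha₂
      have f : (a₁:ℂ)*c₂ - (a₂:ℂ)*c₁ = 0 := by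
        rcases mul_eq_zero.1 keyfac with h5 | h5
        · exact h5
        · have h6 := congrArg (starRingEnd ℂ) h5
          simpa [map_sub, _root_.map_mul, Complex.conj_ofReal, Complex.conj_conj] using h6
      have g : (a₁:ℂ)*(starRingEnd ℂ) c₂ - (a₂:ℂ)*(starRingEnd ℂ) c₁ = 0 := by
        have h6 := congrArg (starRingEnd ℂ) f
        simpa [map_sub, _root_.map_mul, Complex.conj_ofReal, Complex.conj_conj] using h6
      have hb : (a₁:ℂ)*(a₂:ℂ)*((a₁:ℂ)*b₂ - (a₂:ℂ)*b₁) = 0 := by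
        linear_combination (a₁:ℂ)^2 * E2 + ((a₁:ℂ)*(starRingEnd ℂ) c₂) * f
          + ((a₂:ℂ)*c₁) * g - (a₂:ℂ)^2 * E1
      have hab : (a₁:ℂ)*b₂ - (a₂:ℂ)*b₁ = 0 := by
        rcases mul_eq_zero.1 hb with h5 | h5
        · exact absurd h5 (mul_ne_zero ha₁C ha₂C)
        · exact h5
      have habR : a₂ * b₁ = a₁ * b₂ := by
        have : (a₂:ℂ) * b₁ = (a₁:ℂ) * b₂ := by linear_combination -hab
        exact_mod_cast this
      have hdep := ind a₂ (-a₁) ?_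
      · exact ha₁ (neg_eq_zero.1 hdep.2)
      · rw [e₁, e₂]
        ext i j
        fin_cases i <;> fin_cases j <;>
          simp [Complex.real_smul] <;> push_cast
        · ring
        · linear_combination -f
        · linear_combination -g
        · exact_mod_cast (by linarith : (a₂ * b₁ : ℝ) - a₁ * b₂ = 0)


-- ======================= glue =======================

lemma indep_mix' (X Y X' Y' : M2C) (s00 s01 s10 s11 : ℝ)
    (hdet : s00 * s11 - s01 * s10 ≠ 0)
    (h1 : s00 • X + s01 • Y = X') (h2 : s10 • X + s11 • Y = Y')
    (h : Indep X Y) : Indep X' Y' := by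
  subst h1; subst h2
  have hu : IsUnit (!![s00, s01; s10, s11] : M2R) := by
    rw [Matrix.isUnit_iff_isUnit_det, Matrix.det_fin_two_of, isUnit_iff_ne_zero]
    exact hdet
  have := indep_mix (X := X) (Y := Y) !![s00, s01; s10, s11] hu h
  simpa using this

lemma herm_lit (a b : ℝ) (c : ℂ) :
    (!![(a:ℂ), c; (starRingEnd ℂ) c, (b:ℂ)]).IsHermitian := by
  rw [Matrix.IsHermitian]
  ext i j
  fin_cases i <;> fin_cases j <;>
    simp [Matrix.conjTranspose_apply, Complex.conj_ofReal]

lemma caseJc (a b : ℝ) (c : ℂ)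
    (hind : Indep !![(a:ℂ), c; (starRingEnd ℂ) c, (b:ℂ)] Jc) :
    PairEquiv !![(a:ℂ), c; (starRingEnd ℂ) c, (b:ℂ)] Jc E11 E22 ∨
    PairEquiv !![(a:ℂ), c; (starRingEnd ℂ) c, (b:ℂ)] Jc E11 Fnf ∨
    PairEquiv !![(a:ℂ), c; (starRingEnd ℂ) c, (b:ℂ)] Jc Fnf Gnf := by
  have hJlit : Jc = !![((1:ℝ):ℂ), 0; 0, ((-1:ℝ):ℂ)] := by
    rw [Jc]; norm_num
  by_cases hc : c = 0
  · subst hc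
    left
    have hab : a * (-1) - b * 1 ≠ 0 := by
      intro h0
      have h1 := hind 1 (-a) ?_
      · exact one_ne_zero h1.1
      · ext i j
        fin_cases i <;> fin_cases j <;>
          simp [Jc, Complex.real_smul] <;> push_cast <;>
          linear_combination (-(1:ℂ)) * (by exact_mod_cast (by linarith : (a:ℝ) * -1 - b * 1 = 0) :
            (a:ℂ) * (-1) - (b:ℂ) * 1 = 0)
    have hAlit : !![(a:ℂ), 0; (starRingEnd ℂ) 0, (b:ℂ)] = !![(a:ℂ), 0; 0, (b:ℂ)] := by
      norm_num
    rw [hAlit, hJlit]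
    exact diag_to_hyp a b 1 (-1) hab
  · have hm : 0 < Complex.normSq c := Complex.normSq_pos.2 hc
    set m : ℝ := Complex.normSq c with hmdef
    have hcc : (starRingEnd ℂ) c * c = (m:ℂ) := by
      rw [mul_comm]; exact_mod_cast Complex.mul_conj c
    rcases lt_trichotomy ((a+b)^2) (4*m) with hlt | heq | hgt
    · right; right
      have hpos : 0 < m - ((a+b)/2)^2 := by nlinarith
      exact ellip a b m (Real.sqrt (m - ((a+b)/2)^2)) c hm hcc
        (Real.sqrt_pos.2 hpos) (Real.sq_sqrt hpos.le)
    · right; left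
      exact parab a b m c hm hcc heq
    · left
      have hΔ : 0 < (a+b)^2 - 4*m := by linarith
      set D : ℝ := Real.sqrt ((a+b)^2 - 4*m) with hDdef
      have hD : 0 < D := Real.sqrt_pos.2 hΔ
      have hD2 : D^2 = (a+b)^2 - 4*m := Real.sq_sqrt hΔ.le
      rw [hJlit]
      refine diag_pair a b 1 (-1) ((a-b+D)/2) ((a-b-D)/2) m c hc one_ne_zero
        (by norm_num) hcc (by ring) (by nlinarith) (by intro h0; nlinarith)

lemma main2neg (a b d₀ d₁ : ℝ) (c : ℂ) (h₀ : 0 < d₀) (h₁ : d₁ < 0)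
    (hind : Indep !![(a:ℂ), c; (starRingEnd ℂ) c, (b:ℂ)] !![(d₀:ℂ),0;0,(d₁:ℂ)]) :
    PairEquiv !![(a:ℂ), c; (starRingEnd ℂ) c, (b:ℂ)] !![(d₀:ℂ),0;0,(d₁:ℂ)] E11 E22 ∨
    PairEquiv !![(a:ℂ), c; (starRingEnd ℂ) c, (b:ℂ)] !![(d₀:ℂ),0;0,(d₁:ℂ)] E11 Fnf ∨
    PairEquiv !![(a:ℂ), c; (starRingEnd ℂ) c, (b:ℂ)] !![(d₀:ℂ),0;0,(d₁:ℂ)] Fnf Gnf := by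
  obtain ⟨T₂, hT₂, hJ₂⟩ := norm_indef d₀ d₁ h₀ h₁
  have step := pe_congr !![(a:ℂ), c; (starRingEnd ℂ) c, (b:ℂ)] !![(d₀:ℂ),0;0,(d₁:ℂ)] T₂ hT₂
  rw [hJ₂] at step
  have hherm : (T₂ᴴ * !![(a:ℂ), c; (starRingEnd ℂ) c, (b:ℂ)] * T₂).IsHermitian :=
    Matrix.isHermitian_conjTranspose_mul_mul T₂ (herm_lit a b c)
  obtain ⟨a₂, b₂, c₂, e₂⟩ := herm_repr hherm
  have ind₂ : Indep !![(a₂:ℂ), c₂; (starRingEnd ℂ) c₂, (b₂:ℂ)] Jc := by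
    have h5 := indep_congr T₂ hT₂ hind
    rw [hJ₂, e₂] at h5
    exact h5
  rw [e₂] at step
  rcases caseJc a₂ b₂ c₂ ind₂ with h | h | h
  · exact Or.inl (pe_trans step h)
  · exact Or.inr (Or.inl (pe_trans step h))
  · exact Or.inr (Or.inr (pe_trans step h))

lemma main2 (a b d₀ d₁ : ℝ) (c : ℂ) (hd₀ : d₀ ≠ 0) (hd₁ : d₁ ≠ 0)
    (hind : Indep !![(a:ℂ), c; (starRingEnd ℂ) c, (b:ℂ)] !![(d₀:ℂ),0;0,(d₁:ℂ)]) :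
    PairEquiv !![(a:ℂ), c; (starRingEnd ℂ) c, (b:ℂ)] !![(d₀:ℂ),0;0,(d₁:ℂ)] E11 E22 ∨
    PairEquiv !![(a:ℂ), c; (starRingEnd ℂ) c, (b:ℂ)] !![(d₀:ℂ),0;0,(d₁:ℂ)] E11 Fnf ∨
    PairEquiv !![(a:ℂ), c; (starRingEnd ℂ) c, (b:ℂ)] !![(d₀:ℂ),0;0,(d₁:ℂ)] Fnf Gnf := by
  by_cases hc : c = 0
  · subst hc
    left
    have hab : a * d₁ - b * d₀ ≠ 0 := by
      intro h0
      have hcast : (a:ℂ) * d₁ - (b:ℂ) * d₀ = 0 := by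
        exact_mod_cast (by linarith : (a:ℝ) * d₁ - b * d₀ = 0)
      have h1 := hind d₀ (-a) ?_
      · exact hd₀ h1.1
      · ext i j
        fin_cases i <;> fin_cases j <;>
          simp [Complex.real_smul] <;> push_cast <;> (try ring) <;>
          (try linear_combination (1:ℂ) * hcast) <;>
          (try linear_combination (-(1:ℂ)) * hcast) <;>
          (try linear_combination (2:ℂ) * hcast) <;>
          (try linear_combination (-(2:ℂ)) * hcast)
    have hAlit : !![(a:ℂ), 0; (starRingEnd ℂ) 0, (b:ℂ)] = !![(a:ℂ), 0; 0, (b:ℂ)] := by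
      norm_num
    rw [hAlit]
    exact diag_to_hyp a b d₀ d₁ hab
  · have hm : 0 < Complex.normSq c := Complex.normSq_pos.2 hc
    set m : ℝ := Complex.normSq c with hmdef
    have hcc : (starRingEnd ℂ) c * c = (m:ℂ) := by
      rw [mul_comm]; exact_mod_cast Complex.mul_conj c
    rcases lt_trichotomy (d₀*d₁) 0 with hneg | hzero | hpos
    · rcases lt_or_gt_of_ne hd₀ with h₀ | h₀
      · -- d₀ < 0, so d₁ > 0; flip signs
        have h₁ : 0 < d₁ := by
          rcases lt_or_gt_of_ne hd₁ with h | h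
          · nlinarith
          · exact h
        have step0 : PairEquiv !![(a:ℂ), c; (starRingEnd ℂ) c, (b:ℂ)] !![(d₀:ℂ),0;0,(d₁:ℂ)]
            !![(a:ℂ), c; (starRingEnd ℂ) c, (b:ℂ)] !![((-d₀:ℝ):ℂ),0;0,((-d₁:ℝ):ℂ)] := by
          refine pe_mix' _ _ _ _ 1 0 0 (-1) (by norm_num) (by simp) ?_
          ext i j
          fin_cases i <;> fin_cases j <;> simp [Complex.real_smul] <;> push_cast <;> ring
        have ind0 : Indep !![(a:ℂ), c; (starRingEnd ℂ) c, (b:ℂ)]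
            !![((-d₀:ℝ):ℂ),0;0,((-d₁:ℝ):ℂ)] := by
          refine indep_mix' _ _ _ _ 1 0 0 (-1) (by norm_num) (by simp) ?_ hind
          ext i j
          fin_cases i <;> fin_cases j <;> simp [Complex.real_smul] <;> push_cast <;> ring
        rcases main2neg a b (-d₀) (-d₁) c (by linarith) (by linarith) ind0 with h | h | h
        · exact Or.inl (pe_trans step0 h)
        · exact Or.inr (Or.inl (pe_trans step0 h))
        · exact Or.inr (Or.inr (pe_trans step0 h))
      · have h₁ : d₁ < 0 := by nlinarith
        exact main2neg a b d₀ d₁ c h₀ h₁ hind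
    · exact absurd hzero (mul_ne_zero hd₀ hd₁)
    · -- pencil definite-ish: hyperbolic
      left
      have hΔ : 0 < (a*d₁ - b*d₀)^2 + 4*(d₀*d₁)*m := by nlinarith
      set D : ℝ := Real.sqrt ((a*d₁ - b*d₀)^2 + 4*(d₀*d₁)*m) with hDdef
      have hD : 0 < D := Real.sqrt_pos.2 hΔ
      have hD2 : D^2 = (a*d₁ - b*d₀)^2 + 4*(d₀*d₁)*m := Real.sq_sqrt hΔ.le
      have hdd : d₀*d₁ ≠ 0 := mul_ne_zero hd₀ hd₁
      refine diag_pair a b d₀ d₁ ((a*d₁+b*d₀+D)/(2*d₀*d₁)) ((a*d₁+b*d₀-D)/(2*d₀*d₁)) m c hc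
        hd₀ hd₁ hcc ?_ ?_ ?_
      · field_simp
        ring
      · field_simp
        nlinarith [hD2]
      · intro h0
        have : D = 0 := by
          field_simp at h0
          linarith
        exact (ne_of_gt hD) this

lemma main_herm_pair (K₁ K₂ : M2C) (h₁ : K₁.IsHermitian) (h₂ : K₂.IsHermitian)
    (hdet : K₂.det ≠ 0) (hind : Indep K₁ K₂) :
    PairEquiv K₁ K₂ E11 E22 ∨ PairEquiv K₁ K₂ E11 Fnf ∨ PairEquiv K₁ K₂ Fnf Gnf := by
  obtain ⟨p, r, q, e₂⟩ := herm_repr h₂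
  have hpr : p * r - Complex.normSq q ≠ 0 := by
    intro h0
    apply hdet
    rw [e₂, Matrix.det_fin_two_of]
    have : q * (starRingEnd ℂ) q = ((Complex.normSq q : ℝ):ℂ) := by
      exact_mod_cast Complex.mul_conj q
    rw [this]
    rw [show ((p:ℂ) * r - ((Complex.normSq q : ℝ):ℂ)) = ((p * r - Complex.normSq q : ℝ) : ℂ) by
      push_cast; ring, h0]
    simp
  obtain ⟨T, d₀, d₁, hT, hd₀, hd₁, hTK₂⟩ := herm_inv_diag p r q hpr
  rw [← e₂] at hTK₂
  have step1 := pe_congr K₁ K₂ T hT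
  rw [hTK₂] at step1
  have hherm : (Tᴴ * K₁ * T).IsHermitian := Matrix.isHermitian_conjTranspose_mul_mul T h₁
  obtain ⟨a, b, c, e₁'⟩ := herm_repr hherm
  rw [e₁'] at step1
  have ind' : Indep !![(a:ℂ), c; (starRingEnd ℂ) c, (b:ℂ)] !![(d₀:ℂ),0;0,(d₁:ℂ)] := by
    have h5 := indep_congr T hT hind
    rw [hTK₂, e₁'] at h5
    exact h5
  rcases main2 a b d₀ d₁ c hd₀ hd₁ ind' with h | h | h
  · exact Or.inl (pe_trans step1 h)
  · exact Or.inr (Or.inl (pe_trans step1 h))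
  · exact Or.inr (Or.inr (pe_trans step1 h))

end LeviAux


open LeviAux in
/-- Every Levi nondegenerate pair of 2×2 complex Hermitian matrices is equivalent to
the hyperbolic, the parabolic, or the elliptic normal form. -/
theorem levi_nondeg_pair_normal_form (H₁ H₂ : Matrix (Fin 2) (Fin 2) ℂ)
    (h₁ : H₁.IsHermitian) (h₂ : H₂.IsHermitian) (hnd : LeviNondeg H₁ H₂) :
    PairEquiv H₁ H₂ E11 E22 ∨ PairEquiv H₁ H₂ E11 Fnf ∨ PairEquiv H₁ H₂ Fnf Gnf := by
  have ind : Indep H₁ H₂ := li_pair hnd.1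
  obtain ⟨s, t, hdet⟩ := exists_nondeg H₁ H₂ h₁ h₂ hnd
  have hK₂herm : (s • H₁ + t • H₂).IsHermitian := herm_mix h₁ h₂ s t
  by_cases hs : s = 0
  · -- use rows (1,0) and (s,t); det = t
    have ht : t ≠ 0 := by
      intro ht0
      apply hdet
      rw [hs, ht0]
      simp
    have pe1 : PairEquiv H₁ H₂ H₁ (s • H₁ + t • H₂) := by
      refine pe_mix' _ _ _ _ 1 0 s t (by simpa [hs] using ht) (by simp) rfl
    have ind1 : Indep H₁ (s • H₁ + t • H₂) :=
      indep_mix' _ _ _ _ 1 0 s t (by simpa [hs] using ht) (by simp) rfl ind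
    rcases main_herm_pair H₁ (s • H₁ + t • H₂) h₁ hK₂herm hdet ind1 with h | h | h
    · exact Or.inl (pe_trans pe1 h)
    · exact Or.inr (Or.inl (pe_trans pe1 h))
    · exact Or.inr (Or.inr (pe_trans pe1 h))
  · -- use rows (0,1) and (s,t); det = -s
    have pe1 : PairEquiv H₁ H₂ H₂ (s • H₁ + t • H₂) := by
      refine pe_mix' _ _ _ _ 0 1 s t (by simpa using hs) (by simp) rfl
    have ind1 : Indep H₂ (s • H₁ + t • H₂) :=
      indep_mix' _ _ _ _ 0 1 s t (by simpa using hs) (by simp) rfl ind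
    rcases main_herm_pair H₂ (s • H₁ + t • H₂) h₂ hK₂herm hdet ind1 with h | h | h
    · exact Or.inl (pe_trans pe1 h)
    · exact Or.inr (Or.inl (pe_trans pe1 h))
    · exact Or.inr (Or.inr (pe_trans pe1 h))
end
end

section
/- Let E be a real normed vector space, let V, V′, W, W′ : E → E be vector fields that are differentiable at a point u ∈ E, and let S ⊆ E be a set containing u on which V = V′ and W = W′. Suppose there are curves γ, δ : ℝ → E, differentiable at 0, with γ(0) = δ(0) = u, γ′(0) = V(u), δ′(0) = W(u), whose images near 0 are contained in S. Then the Lie brackets of the vector fields agree at u: [V, W](u) = [V′, W′](u). -/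
open Set Filter Topology

/- If a curve `c` with `c t = x` stays in `S`, where `A = A'`, then `A ∘ c` and `A' ∘ c` agree near `t`;
by the chain rule and uniqueness of derivatives, `DA(x)(c' t) = DA'(x)(c' t)`. Along `γ` this gives
`DW(u)(V u) = DW'(u)(V u)`, along `δ` it gives `DV(u)(W u) = DV'(u)(W u)`, and `u = γ 0 ∈ S` gives
`V u = V' u`, `W u = W' u`. -/

theorem fderiv_apply_eq_of_eqOn_of_curve {𝕜 E F : Type*} [NontriviallyNormedField 𝕜]
    [NormedAddCommGroup E] [NormedSpace 𝕜 E] [NormedAddCommGroup F] [NormedSpace 𝕜 F]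
    {A A' : E → F} {S : Set E} {c : 𝕜 → E} {x v : E} {t : 𝕜}
    (hA : DifferentiableAt 𝕜 A x) (hA' : DifferentiableAt 𝕜 A' x) (hAA' : EqOn A A' S)
    (hct : c t = x) (hc : HasDerivAt c v t) (hcS : ∀ᶠ s in 𝓝 t, c s ∈ S) :
    fderiv 𝕜 A x v = fderiv 𝕜 A' x v := by
  subst hct
  have hAc : HasDerivAt (A ∘ c) (fderiv 𝕜 A (c t) v) t := hA.hasFDerivAt.comp_hasDerivAt t hc
  have hA'c : HasDerivAt (A' ∘ c) (fderiv 𝕜 A' (c t) v) t := hA'.hasFDerivAt.comp_hasDerivAt t hc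
  have hcomp : A ∘ c =ᶠ[𝓝 t] A' ∘ c := hcS.mono fun _ hs => hAA' hs
  exact hAc.unique (hA'c.congr_of_eventuallyEq hcomp)

theorem lie_bracket_eq_of_eqOn_general
    {E : Type*} [NormedAddCommGroup E] [NormedSpace ℝ E]
    (V V' W W' : E → E) (u : E) (S : Set E)
    (hV : DifferentiableAt ℝ V u) (hV' : DifferentiableAt ℝ V' u)
    (hW : DifferentiableAt ℝ W u) (hW' : DifferentiableAt ℝ W' u)
    (hVV' : Set.EqOn V V' S) (hWW' : Set.EqOn W W' S)
    (γ δ : ℝ → E) (hγ0 : γ 0 = u) (hδ0 : δ 0 = u)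
    (hγd : HasDerivAt γ (V u) 0) (hδd : HasDerivAt δ (W u) 0)
    (hγS : ∀ᶠ t in nhds (0 : ℝ), γ t ∈ S)
    (hδS : ∀ᶠ t in nhds (0 : ℝ), δ t ∈ S) :
    fderiv ℝ W u (V u) - fderiv ℝ V u (W u) =
      fderiv ℝ W' u (V' u) - fderiv ℝ V' u (W' u) := by
  have hu : u ∈ S := hγ0 ▸ hγS.self_of_nhds
  rw [fderiv_apply_eq_of_eqOn_of_curve hW hW' hWW' hγ0 hγd hγS,
    fderiv_apply_eq_of_eqOn_of_curve hV hV' hVV' hδ0 hδd hδS, hVV' hu, hWW' hu]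

/-- Two pairs of vector fields that agree on a set `S` containing curves through `u`
in the directions `V u` and `W u` have the same Lie bracket
`[V, W](u) = DW(u)(V(u)) − DV(u)(W(u))` at `u`. -/
theorem lie_bracket_eq_of_eqOn
    {E : Type*} [NormedAddCommGroup E] [NormedSpace ℝ E]
    (V V' W W' : E → E) (u : E) (S : Set E) (hu : u ∈ S)
    (hV : DifferentiableAt ℝ V u) (hV' : DifferentiableAt ℝ V' u)
    (hW : DifferentiableAt ℝ W u) (hW' : DifferentiableAt ℝ W' u)
    (hVV' : Set.EqOn V V' S) (hWW' : Set.EqOn W W' S)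
    (γ δ : ℝ → E) (hγ0 : γ 0 = u) (hδ0 : δ 0 = u)
    (hγd : HasDerivAt γ (V u) 0) (hδd : HasDerivAt δ (W u) 0)
    (hγS : ∀ᶠ t in nhds (0 : ℝ), γ t ∈ S)
    (hδS : ∀ᶠ t in nhds (0 : ℝ), δ t ∈ S) :
    fderiv ℝ W u (V u) - fderiv ℝ V u (W u) =
      fderiv ℝ W' u (V' u) - fderiv ℝ V' u (W' u) :=
  lie_bracket_eq_of_eqOn_general V V' W W' u S hV hV' hW hW' hVV' hWW' γ δ hγ0 hδ0 hγd hδd hγS hδS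
end
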